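/- Let ψ = v v† be a pure state on n qubits and P ∈ P_n. Then Σ_{Q ∈ P_n, PQ = QP} p_ψ(Q) = (1 + tr(Pψ)²)/2; that is, the probability under the Pauli distribution p_ψ that a sampled Pauli commutes with P equals (1 + tr(Pψ)²)/2. -/

import Mathlib

open Matrix
open scoped Classical

noncomputable section

/-- The four 2×2 Pauli matrices: `0 ↦ I`, `1 ↦ X`, `2 ↦ Y`, `3 ↦ Z`. -/
def pauli1 : Fin 4 → Matrix (Fin 2) (Fin 2) ℂ
  | 0 => !![1, 0; 0, 1]
  | 1 => !![0, 1; 1, 0]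
  | 2 => !![0, -Complex.I; Complex.I, 0]
  | 3 => !![1, 0; 0, -1]

/-- The `n`-qubit Pauli operator associated to the string `s : Fin n → Fin 4`. -/
def PauliOp (n : ℕ) (s : Fin n → Fin 4) :
    Matrix (Fin n → Fin 2) (Fin n → Fin 2) ℂ :=
  Matrix.of fun i j => ∏ a, pauli1 (s a) (i a) (j a)

/-- The Pauli distribution of a state `ψ`: `p_ψ(P) = tr(Pψ)² / 2^n`. -/
def pDist (n : ℕ) (ψ : Matrix (Fin n → Fin 2) (Fin n → Fin 2) ℂ)
    (s : Fin n → Fin 4) : ℝ :=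
  ((Matrix.trace (PauliOp n s * ψ)).re) ^ 2 / 2 ^ n

/-!
The Pauli operators form an orthogonal basis, `∑_Q tr(QA) tr(QB) = 2ⁿ tr(AB)`, and any two of
them commute or anticommute, so `PQP = ±Q` with `+` exactly when `PQ = QP`. The commuting mass is
therefore half of `∑_Q p_ψ(Q) = tr(ψ²) = 1` plus `∑_Q ±p_ψ(Q) = tr(ψ · PψP) = tr(Pψ)²`, where the
last step uses that `ψ` has rank one: `ψAψ = tr(Aψ) ψ`.
-/

def pauliSign1 (σ τ : Fin 4) : ℝ := if σ = 0 ∨ τ = 0 ∨ σ = τ then 1 else -1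

lemma pauli1_mul_self (σ : Fin 4) : pauli1 σ * pauli1 σ = 1 := by
  fin_cases σ <;> ext i j <;> fin_cases i <;> fin_cases j <;>
    simp [pauli1, Matrix.mul_apply, Fin.sum_univ_two]

lemma pauli1_mul_comm (σ τ : Fin 4) :
    pauli1 σ * pauli1 τ = (pauliSign1 σ τ : ℂ) • (pauli1 τ * pauli1 σ) := by
  fin_cases σ <;> fin_cases τ <;> ext i j <;> fin_cases i <;> fin_cases j <;>
    simp [pauli1, pauliSign1, Matrix.mul_apply, Fin.sum_univ_two]

lemma pauli1_conjTranspose (σ : Fin 4) : (pauli1 σ)ᴴ = pauli1 σ := by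
  fin_cases σ <;> ext i j <;> fin_cases i <;> fin_cases j <;> simp [pauli1]

lemma sum_pauli1_apply_mul_pauli1_apply (i j k l : Fin 2) :
    ∑ σ, pauli1 σ i j * pauli1 σ k l = if i = l ∧ j = k then 2 else 0 := by
  fin_cases i <;> fin_cases j <;> fin_cases k <;> fin_cases l <;>
    norm_num [Fin.sum_univ_four, pauli1]

def pauliSign (n : ℕ) (s t : Fin n → Fin 4) : ℝ := ∏ a, pauliSign1 (s a) (t a)

lemma Matrix.IsHermitian.ofReal_re_trace_mul {m : Type*} [Fintype m]
    {A B : Matrix m m ℂ} (hA : A.IsHermitian) (hB : B.IsHermitian) :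
    ((trace (A * B)).re : ℂ) = trace (A * B) := by
  refine Complex.conj_eq_iff_re.mp ?_
  rw [← Complex.star_def, ← trace_conjTranspose, conjTranspose_mul, hA.eq, hB.eq,
    trace_mul_comm]

lemma vecMulVec_mul_mul_vecMulVec {m : Type*} [Fintype m] (v w : m → ℂ) (A : Matrix m m ℂ) :
    vecMulVec v w * A * vecMulVec v w = trace (A * vecMulVec v w) • vecMulVec v w := by
  rw [vecMulVec_mul, vecMulVec_mul_vecMulVec, mul_vecMulVec, trace_vecMulVec,
    vecMulVec_smul, ← dotProduct_mulVec, dotProduct_comm]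

section PauliOp

variable {n : ℕ}

lemma PauliOp_mul_apply (s t : Fin n → Fin 4) (i j : Fin n → Fin 2) :
    (PauliOp n s * PauliOp n t) i j = ∏ a, (pauli1 (s a) * pauli1 (t a)) (i a) (j a) := by
  simp only [Matrix.mul_apply, PauliOp, Matrix.of_apply, Fintype.prod_sum,
    Finset.prod_mul_distrib]

lemma PauliOp_mul_self (s : Fin n → Fin 4) : PauliOp n s * PauliOp n s = 1 := by
  ext i j
  simp [PauliOp_mul_apply, pauli1_mul_self, Matrix.one_apply, Fintype.prod_boole, ← funext_iff]

lemma PauliOp_mul_comm (s t : Fin n → Fin 4) :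
    PauliOp n s * PauliOp n t = (pauliSign n s t : ℂ) • (PauliOp n t * PauliOp n s) := by
  ext i j
  rw [Matrix.smul_apply, PauliOp_mul_apply, PauliOp_mul_apply, smul_eq_mul, pauliSign,
    Complex.ofReal_prod, ← Finset.prod_mul_distrib]
  exact Finset.prod_congr rfl fun a _ => by rw [pauli1_mul_comm]; rfl

lemma PauliOp_mul_mul_self (s t : Fin n → Fin 4) :
    PauliOp n s * PauliOp n t * PauliOp n s = (pauliSign n s t : ℂ) • PauliOp n t := by
  rw [PauliOp_mul_comm, Matrix.smul_mul, Matrix.mul_assoc, PauliOp_mul_self, Matrix.mul_one]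

lemma pauliSign_eq_one_or_eq_neg_one (s t : Fin n → Fin 4) :
    pauliSign n s t = 1 ∨ pauliSign n s t = -1 := by
  refine Finset.prod_induction _ (fun x => x = 1 ∨ x = -1) ?_ (Or.inl rfl) ?_
  · rintro x y (rfl | rfl) (rfl | rfl) <;> norm_num
  · intro a _
    unfold pauliSign1
    split_ifs <;> simp

lemma pauliSign_eq_ite (s t : Fin n → Fin 4) :
    pauliSign n s t =
      if PauliOp n s * PauliOp n t = PauliOp n t * PauliOp n s then 1 else -1 := by
  rcases pauliSign_eq_one_or_eq_neg_one s t with h | h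
  · simp [PauliOp_mul_comm s t, h]
  · rw [h, if_neg]
    intro hcomm
    have h1 : (1 : Matrix (Fin n → Fin 2) (Fin n → Fin 2) ℂ) = -1 := by
      calc 1 = PauliOp n s * PauliOp n t * PauliOp n s * PauliOp n t := by
            rw [hcomm, Matrix.mul_assoc (PauliOp n t), PauliOp_mul_self, Matrix.mul_one,
              PauliOp_mul_self]
        _ = -1 := by
            rw [PauliOp_mul_mul_self, h, Matrix.smul_mul, PauliOp_mul_self]
            simp
    exact absurd (congrFun₂ h1 (fun _ => 0) (fun _ => 0)) (by norm_num)

lemma PauliOp_isHermitian (s : Fin n → Fin 4) : (PauliOp n s).IsHermitian := by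
  ext i j
  simp only [Matrix.conjTranspose_apply, PauliOp, Matrix.of_apply, star_prod]
  exact Finset.prod_congr rfl fun a _ => congrFun₂ (pauli1_conjTranspose (s a)) (i a) (j a)

lemma sum_PauliOp_apply_mul_PauliOp_apply (i j k l : Fin n → Fin 2) :
    ∑ t, PauliOp n t i j * PauliOp n t k l = if i = l ∧ j = k then 2 ^ n else 0 := by
  simp only [PauliOp, Matrix.of_apply, ← Finset.prod_mul_distrib]
  rw [← Fintype.prod_sum (fun a σ => pauli1 σ (i a) (j a) * pauli1 σ (k a) (l a))]
  simp only [sum_pauli1_apply_mul_pauli1_apply, Fintype.prod_ite_zero, Finset.prod_const,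
    Finset.card_univ, Fintype.card_fin, forall_and, ← funext_iff]

lemma sum_trace_PauliOp_mul_smul_PauliOp (A : Matrix (Fin n → Fin 2) (Fin n → Fin 2) ℂ) :
    ∑ t, trace (PauliOp n t * A) • PauliOp n t = (2 ^ n : ℂ) • A := by
  ext k l
  calc (∑ t, trace (PauliOp n t * A) • PauliOp n t) k l
      = ∑ i, ∑ j, (∑ t, PauliOp n t i j * PauliOp n t k l) * A j i := by
        simp only [Matrix.sum_apply, Matrix.smul_apply, smul_eq_mul, trace, diag,
          Matrix.mul_apply, Finset.sum_mul]
        rw [Finset.sum_comm]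
        refine Finset.sum_congr rfl fun i _ => ?_
        rw [Finset.sum_comm]
        exact Finset.sum_congr rfl fun j _ => Finset.sum_congr rfl fun t _ => by ring
    _ = ((2 ^ n : ℂ) • A) k l := by
        simp [sum_PauliOp_apply_mul_PauliOp_apply, ite_and]

lemma sum_trace_PauliOp_mul_mul_trace_PauliOp_mul
    (A B : Matrix (Fin n → Fin 2) (Fin n → Fin 2) ℂ) :
    ∑ t, trace (PauliOp n t * A) * trace (PauliOp n t * B) = 2 ^ n * trace (A * B) := by
  calc ∑ t, trace (PauliOp n t * A) * trace (PauliOp n t * B)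
      = trace ((∑ t, trace (PauliOp n t * A) • PauliOp n t) * B) := by
        simp only [Finset.sum_mul, trace_sum, Matrix.smul_mul, trace_smul, smul_eq_mul]
    _ = 2 ^ n * trace (A * B) := by
        rw [sum_trace_PauliOp_mul_smul_PauliOp, Matrix.smul_mul, trace_smul, smul_eq_mul]

lemma sum_re_trace_PauliOp_mul_mul_re_trace_PauliOp_mul
    {A B : Matrix (Fin n → Fin 2) (Fin n → Fin 2) ℂ} (hA : A.IsHermitian) (hB : B.IsHermitian) :
    ∑ t, (trace (PauliOp n t * A)).re * (trace (PauliOp n t * B)).re =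
      2 ^ n * (trace (A * B)).re := by
  apply Complex.ofReal_injective
  push_cast
  simp only [(PauliOp_isHermitian _).ofReal_re_trace_mul hA,
    (PauliOp_isHermitian _).ofReal_re_trace_mul hB, hA.ofReal_re_trace_mul hB]
  exact sum_trace_PauliOp_mul_mul_trace_PauliOp_mul A B

lemma trace_PauliOp_mul_PauliOp_mul_mul_PauliOp (s t : Fin n → Fin 4)
    (A : Matrix (Fin n → Fin 2) (Fin n → Fin 2) ℂ) :
    trace (PauliOp n t * (PauliOp n s * A * PauliOp n s)) =
      pauliSign n s t * trace (PauliOp n t * A) := by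
  rw [← Matrix.mul_assoc, trace_mul_cycle, ← Matrix.mul_assoc, PauliOp_mul_mul_self,
    Matrix.smul_mul, trace_smul, smul_eq_mul]

lemma sum_pDist {A : Matrix (Fin n → Fin 2) (Fin n → Fin 2) ℂ} (hA : A.IsHermitian) :
    ∑ t, pDist n A t = (trace (A * A)).re := by
  rw [← mul_div_cancel_left₀ (trace (A * A)).re (pow_ne_zero n two_ne_zero),
    ← sum_re_trace_PauliOp_mul_mul_re_trace_PauliOp_mul hA hA, Finset.sum_div]
  simp only [pDist, sq]

lemma sum_pauliSign_mul_pDist {A : Matrix (Fin n → Fin 2) (Fin n → Fin 2) ℂ}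
    (hA : A.IsHermitian) (s : Fin n → Fin 4) :
    ∑ t, pauliSign n s t * pDist n A t = (trace (A * (PauliOp n s * A * PauliOp n s))).re := by
  have hconj : (PauliOp n s * A * PauliOp n s).IsHermitian := by
    simpa [(PauliOp_isHermitian s).eq] using
      isHermitian_conjTranspose_mul_mul (PauliOp n s) hA
  have h := sum_re_trace_PauliOp_mul_mul_re_trace_PauliOp_mul hA hconj
  simp only [trace_PauliOp_mul_PauliOp_mul_mul_PauliOp, Complex.re_ofReal_mul] at h
  rw [← mul_div_cancel_left₀ (trace (A * (PauliOp n s * A * PauliOp n s))).re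
    (pow_ne_zero n two_ne_zero), ← h, Finset.sum_div]
  exact Finset.sum_congr rfl fun t _ => by rw [pDist]; ring

lemma sum_filter_commute_PauliOp (s : Fin n → Fin 4) (f : (Fin n → Fin 4) → ℝ) :
    ∑ t ∈ Finset.univ.filter (fun t => PauliOp n s * PauliOp n t = PauliOp n t * PauliOp n s),
      f t = (∑ t, f t + ∑ t, pauliSign n s t * f t) / 2 := by
  rw [Finset.sum_filter, ← Finset.sum_add_distrib, Finset.sum_div]
  refine Finset.sum_congr rfl fun t _ => ?_
  rw [pauliSign_eq_ite]
  split_ifs <;> ring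

end PauliOp

theorem pauli_dist_commuting_mass_general (n : ℕ)
    (v : (Fin n → Fin 2) → ℂ) (hv : star v ⬝ᵥ v = 1) (s : Fin n → Fin 4) :
    ∑ s' ∈ Finset.univ.filter (fun s' : Fin n → Fin 4 =>
        PauliOp n s * PauliOp n s' = PauliOp n s' * PauliOp n s),
      pDist n (Matrix.vecMulVec v (star v)) s' =
    (1 + ((Matrix.trace (PauliOp n s * Matrix.vecMulVec v (star v))).re) ^ 2) / 2 := by
  set ψ := vecMulVec v (star v)
  have hψ : ψ.IsHermitian := by simp [ψ, IsHermitian]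
  have hpurity : trace (ψ * ψ) = 1 := by
    rw [vecMulVec_mul_vecMulVec, hv, one_smul, trace_vecMulVec, dotProduct_comm, hv]
  have hconj : trace (ψ * (PauliOp n s * ψ * PauliOp n s)) = trace (PauliOp n s * ψ) ^ 2 := by
    rw [← Matrix.mul_assoc, ← Matrix.mul_assoc, vecMulVec_mul_mul_vecMulVec, Matrix.smul_mul,
      trace_smul, trace_mul_comm ψ, smul_eq_mul, sq]
  rw [sum_filter_commute_PauliOp, sum_pDist hψ, sum_pauliSign_mul_pDist hψ, hpurity, hconj,
    ← (PauliOp_isHermitian s).ofReal_re_trace_mul hψ]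
  norm_cast

/-- For a pure state `ψ = v v†` and `P ∈ 𝒫_n`, the probability under the Pauli
distribution that a sampled Pauli commutes with `P` is `(1 + tr(Pψ)²)/2`. -/
theorem pauli_dist_commuting_mass (n : ℕ) (hn : 1 ≤ n)
    (v : (Fin n → Fin 2) → ℂ) (hv : star v ⬝ᵥ v = 1) (s : Fin n → Fin 4) :
    ∑ s' ∈ Finset.univ.filter (fun s' : Fin n → Fin 4 =>
        PauliOp n s * PauliOp n s' = PauliOp n s' * PauliOp n s),
      pDist n (Matrix.vecMulVec v (star v)) s' =
    (1 + ((Matrix.trace (PauliOp n s * Matrix.vecMulVec v (star v))).re) ^ 2) / 2 :=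
  pauli_dist_commuting_mass_general n v hv s
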